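/- Let p : E → B be a surjective fibration and let p' : E' → B' be the pullback of p along a map f : B' → B. Then secat_m(p') ≤ cat_m(f). If moreover E is contractible, then secat_m(p') = cat_m(f). -/

import Mathlib

universe u

namespace RelativeCWComplex

/-- The `n`-dimensional sphere (as in the December 2024 Mathlib). -/
noncomputable def sphere (n : ℤ) : TopCat.{u} :=
  TopCat.of <| ULift <| Metric.sphere (0 : EuclideanSpace ℝ <| Fin <| (n + 1).toNat) 1

/-- The `n`-dimensional closed disk (as in the December 2024 Mathlib). -/
noncomputable def disk (n : ℤ) : TopCat.{u} :=
  TopCat.of <| ULift <| Metric.closedBall (0 : EuclideanSpace ℝ <| Fin <| n.toNat) 1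

/-- The inclusion map from the `n`-sphere to the `(n+1)`-disk. -/
noncomputable def sphereInclusion (n : ℤ) : sphere.{u} n ⟶ disk.{u} (n + 1) :=
  TopCat.ofHom
    { toFun := fun ⟨⟨p, hp⟩⟩ => ⟨⟨p, le_of_eq hp⟩⟩
      continuous_toFun := by fun_prop }

/-- Attaching generalized cells along `f`. -/
structure AttachGeneralizedCells {S D : TopCat.{u}} (f : S ⟶ D) (X X' : TopCat.{u}) where
  /-- The index type over the generalized cells -/
  cells : Type u
  /-- An attaching map for each generalized cell -/
  attachMaps : cells → (S ⟶ X)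
  /-- `X'` is a pushout of `∐ S ⟶ X` and `∐ S ⟶ ∐ D`. -/
  iso_pushout : X' ≅ CategoryTheory.Limits.pushout (CategoryTheory.Limits.Sigma.desc attachMaps)
    (CategoryTheory.Limits.Sigma.map fun (_ : cells) => f)

/-- Attaching `(n+1)`-cells. -/
abbrev AttachCells (n : ℤ) := AttachGeneralizedCells (sphereInclusion.{u} n)

end RelativeCWComplex

/-- Relative CW-complex (the structure of the December 2024 Mathlib). -/
structure RelativeCWComplex (A : TopCat.{u}) where
  /-- The skeletons. -/
  sk : ℕ → TopCat.{u}
  /-- `A` is the $(-1)$-skeleton. -/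
  isoSkZero : sk 0 ≅ A
  /-- Cells attached at each stage. -/
  attachCells (n : ℕ) : RelativeCWComplex.AttachCells ((n : ℤ) - 1) (sk n) (sk (n + 1))

/-- CW-complex (the structure of the December 2024 Mathlib). -/
structure CWComplex extends RelativeCWComplex (TopCat.of PEmpty.{u + 1}) where

namespace RelativeCWComplex

/-- The inclusion map from `X` to `X'`. -/
noncomputable def AttachCells.inclusion {X X' : TopCat.{u}} {n : ℤ} (att : AttachCells n X X') :
    X ⟶ X' :=
  CategoryTheory.CategoryStruct.comp (CategoryTheory.Limits.pushout.inl _ _) att.iso_pushout.inv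

/-- The inclusion map from `sk n` to `sk (n + 1)`. -/
noncomputable def skInclusion {A : TopCat.{u}} (X : RelativeCWComplex A) (n : ℕ) :
    X.sk n ⟶ X.sk (n + 1) :=
  (X.attachCells n).inclusion

/-- The topology on a relative CW-complex. -/
noncomputable def toTopCat {A : TopCat.{u}} (X : RelativeCWComplex A) : TopCat.{u} :=
  CategoryTheory.Limits.colimit (CategoryTheory.Functor.ofSequence (skInclusion X))

end RelativeCWComplex

/-- The underlying topological space of a CW complex. -/
abbrev CWSpace (K : CWComplex.{u}) : Type u := K.toRelativeCWComplex.toTopCat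

/-- A CW complex has dimension at most `m` if it has no cells of dimension `> m`. -/
def CWDimLE (K : CWComplex.{u}) (m : ℕ) : Prop :=
  ∀ n : ℕ, m < n →
    IsEmpty (RelativeCWComplex.AttachGeneralizedCells.cells (K.toRelativeCWComplex.attachCells n))

/-- Hurewicz fibration: the homotopy lifting property with respect to all spaces. -/
def IsFibration {E B : Type u} [TopologicalSpace E] [TopologicalSpace B] (p : C(E, B)) : Prop :=
  ∀ (X : Type u) [TopologicalSpace X] (f : C(X, E)) (H : C(X × unitInterval, B)),
    (∀ x, H (x, 0) = p (f x)) →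
    ∃ H' : C(X × unitInterval, E), (∀ z, p (H' z) = H z) ∧ (∀ x, H' (x, 0) = f x)

/-- The inclusion of a subset as a continuous map. -/
def inclMap {X : Type u} [TopologicalSpace X] (U : Set X) : C(U, X) :=
  ⟨Subtype.val, continuous_subtype_val⟩

/-- Property `A_{m,p}`: every map into `U` from an `m`-dimensional CW complex lifts through `p`. -/
def LiftingProp {E B : Type u} [TopologicalSpace E] [TopologicalSpace B]
    (p : C(E, B)) (m : ℕ) (U : Set B) : Prop :=
  ∀ K : CWComplex.{u}, CWDimLE K m → ∀ φ : C(CWSpace K, U),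
    ∃ s : C(CWSpace K, E), ∀ x, p (s x) = (φ x : B)

/-- The `m`-sectional category of `p`, valued in `ℕ∞` (`⊤` if no finite cover exists). -/
noncomputable def secatm {E B : Type u} [TopologicalSpace E] [TopologicalSpace B]
    (p : C(E, B)) (m : ℕ) : ℕ∞ :=
  sInf ((fun n : ℕ => (n : ℕ∞)) ''
    {k : ℕ | ∃ U : Fin (k + 1) → Set B, (∀ i, IsOpen (U i)) ∧ (⋃ i, U i) = Set.univ ∧
      ∀ i, LiftingProp p m (U i)})

/-- The classical sectional category. -/
noncomputable def secat {E B : Type u} [TopologicalSpace E] [TopologicalSpace B]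
    (p : C(E, B)) : ℕ∞ :=
  sInf ((fun n : ℕ => (n : ℕ∞)) ''
    {k : ℕ | ∃ U : Fin (k + 1) → Set B, (∀ i, IsOpen (U i)) ∧ (⋃ i, U i) = Set.univ ∧
      ∀ i, ∃ s : C((U i : Set B), E), ∀ x, p (s x) = (x : B)})

/-- Property `B_m`. -/
def NullProp {X : Type u} [TopologicalSpace X] (m : ℕ) (U : Set X) : Prop :=
  ∀ K : CWComplex.{u}, CWDimLE K m → ∀ φ : C(CWSpace K, U),
    ((inclMap U).comp φ).Nullhomotopic

/-- The `m`-dimensional Lusternik–Schnirelmann category. -/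
noncomputable def catm (X : Type u) [TopologicalSpace X] (m : ℕ) : ℕ∞ :=
  sInf ((fun n : ℕ => (n : ℕ∞)) ''
    {k : ℕ | ∃ U : Fin (k + 1) → Set X, (∀ i, IsOpen (U i)) ∧ (⋃ i, U i) = Set.univ ∧
      ∀ i, NullProp m (U i)})

/-- Classical (normalized) LS category. -/
noncomputable def catLS (X : Type u) [TopologicalSpace X] : ℕ∞ :=
  sInf ((fun n : ℕ => (n : ℕ∞)) ''
    {k : ℕ | ∃ U : Fin (k + 1) → Set X, (∀ i, IsOpen (U i)) ∧ (⋃ i, U i) = Set.univ ∧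
      ∀ i, (inclMap (U i)).Nullhomotopic})

/-- Property `C_{m,f}`. -/
def NullPropMap {X Y : Type u} [TopologicalSpace X] [TopologicalSpace Y]
    (f : C(X, Y)) (m : ℕ) (U : Set X) : Prop :=
  ∀ K : CWComplex.{u}, CWDimLE K m → ∀ φ : C(CWSpace K, U),
    ((f.comp (inclMap U)).comp φ).Nullhomotopic

/-- The `m`-dimensional LS category of a map. -/
noncomputable def catmMap {X Y : Type u} [TopologicalSpace X] [TopologicalSpace Y]
    (f : C(X, Y)) (m : ℕ) : ℕ∞ :=
  sInf ((fun n : ℕ => (n : ℕ∞)) ''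
    {k : ℕ | ∃ U : Fin (k + 1) → Set X, (∀ i, IsOpen (U i)) ∧ (⋃ i, U i) = Set.univ ∧
      ∀ i, NullPropMap f m (U i)})

/-- Property `D_{m,f,g}`. -/
def DistProp {X Y : Type u} [TopologicalSpace X] [TopologicalSpace Y]
    (f g : C(X, Y)) (m : ℕ) (U : Set X) : Prop :=
  ∀ K : CWComplex.{u}, CWDimLE K m → ∀ φ : C(CWSpace K, U),
    ((f.comp (inclMap U)).comp φ).Homotopic ((g.comp (inclMap U)).comp φ)

/-- The `m`-homotopic distance. -/
noncomputable def homDistm {X Y : Type u} [TopologicalSpace X] [TopologicalSpace Y]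
    (f g : C(X, Y)) (m : ℕ) : ℕ∞ :=
  sInf ((fun n : ℕ => (n : ℕ∞)) ''
    {k : ℕ | ∃ U : Fin (k + 1) → Set X, (∀ i, IsOpen (U i)) ∧ (⋃ i, U i) = Set.univ ∧
      ∀ i, DistProp f g m (U i)})


section Aux

variable {E B B' : Type u} [TopologicalSpace E] [TopologicalSpace B] [TopologicalSpace B']

private lemma aux_null_to_lift (p : C(E, B)) (hp : IsFibration p)
    (hsurj : Function.Surjective p) (f : C(B', B)) (m : ℕ) (U : Set B')
    (h : NullPropMap f m U) :
    LiftingProp (⟨fun z => z.1.1, by exact continuous_fst.comp continuous_subtype_val⟩ :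
      C({z : B' × E // p z.2 = f z.1}, B')) m U := by
  intro K hK φ
  obtain ⟨y, hy⟩ := h K hK φ
  obtain ⟨e₀, he₀⟩ := hsurj y
  obtain ⟨H⟩ := hy.symm
  obtain ⟨H', hH'1, hH'2⟩ := hp (CWSpace K) (ContinuousMap.const _ e₀)
    ⟨fun z => H (z.2, z.1), H.continuous.comp (continuous_snd.prodMk continuous_fst)⟩
    (fun x => by simp [he₀])
  refine ⟨⟨fun x => ⟨((φ x : B'), H' (x, 1)), ?_⟩, ?_⟩, ?_⟩
  · rw [hH'1]
    have := H.apply_one x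
    simp only [Set.mem_setOf_eq, inclMap, ContinuousMap.comp_apply, ContinuousMap.coe_mk] at this ⊢
    exact this
  · apply Continuous.subtype_mk
    exact ((continuous_subtype_val.comp φ.continuous).prodMk
      (H'.continuous.comp (continuous_id.prodMk continuous_const)))
  · intro x; rfl

private lemma aux_lift_to_null (p : C(E, B)) (f : C(B', B)) (m : ℕ)
    (hE : ContractibleSpace E) (U : Set B')
    (h : LiftingProp (⟨fun z => z.1.1, by exact continuous_fst.comp continuous_subtype_val⟩ :
      C({z : B' × E // p z.2 = f z.1}, B')) m U) :
    NullPropMap f m U := by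
  intro K hK φ
  obtain ⟨s, hs⟩ := h K hK φ
  haveI := hE
  set e : C(CWSpace K, E) := ⟨fun x => (s x).1.2,
    continuous_snd.comp (continuous_subtype_val.comp s.continuous)⟩ with he_def
  have key : ((f.comp (inclMap U)).comp φ) = p.comp e := by
    ext x
    show f ((φ x : B')) = p ((s x).1.2)
    rw [(s x).2]
    have : (s x).1.1 = (φ x : B') := hs x
    rw [this]
  rw [key]
  obtain ⟨e₀, hid⟩ := id_nullhomotopic E
  have he : e.Nullhomotopic := by
    have := ContinuousMap.Nullhomotopic.comp_left ⟨e₀, hid⟩ e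
    simpa using this
  exact he.comp_right p

end Aux

/-- `secat_m` of a pullback is bounded by `cat_m` of the map pulled back along, with
equality when the total space is contractible. -/
theorem stmt7 {E B B' : Type u} [TopologicalSpace E] [TopologicalSpace B] [TopologicalSpace B']
    (p : C(E, B)) (hp : IsFibration p) (hsurj : Function.Surjective p)
    (f : C(B', B)) (m : ℕ) :
    secatm (⟨fun z => z.1.1, by exact continuous_fst.comp continuous_subtype_val⟩ :
        C({z : B' × E // p z.2 = f z.1}, B')) m ≤ catmMap f m ∧
    (ContractibleSpace E →
      secatm (⟨fun z => z.1.1, by exact continuous_fst.comp continuous_subtype_val⟩ :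
        C({z : B' × E // p z.2 = f z.1}, B')) m = catmMap f m) := by
  have h1 : {k : ℕ | ∃ U : Fin (k + 1) → Set B', (∀ i, IsOpen (U i)) ∧ (⋃ i, U i) = Set.univ ∧
      ∀ i, NullPropMap f m (U i)} ⊆
    {k : ℕ | ∃ U : Fin (k + 1) → Set B', (∀ i, IsOpen (U i)) ∧ (⋃ i, U i) = Set.univ ∧
      ∀ i, LiftingProp (⟨fun z => z.1.1, by exact continuous_fst.comp continuous_subtype_val⟩ :
        C({z : B' × E // p z.2 = f z.1}, B')) m (U i)} := by
    rintro k ⟨U, hopen, hcov, hnull⟩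
    exact ⟨U, hopen, hcov, fun i => aux_null_to_lift p hp hsurj f m (U i) (hnull i)⟩
  constructor
  · exact sInf_le_sInf (Set.image_mono h1)
  · intro hE
    refine le_antisymm (sInf_le_sInf (Set.image_mono h1)) (sInf_le_sInf (Set.image_mono ?_))
    rintro k ⟨U, hopen, hcov, hlift⟩
    exact ⟨U, hopen, hcov, fun i => aux_lift_to_null p f m hE (U i) (hlift i)⟩
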